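/- arXiv:2405.07057 — 5 statements merged into one kernel-verified Lean document; each statement's English description precedes it below -/
import Mathlib

section
/- Let X₁, X₂ and Z be mutually independent real random variables, where X₁ is exponentially distributed with mean λ₁ > 0, X₂ is exponentially distributed with mean λ₂ > 0, and Z is nonnegative. Let A, B, η, ρ, u > 0. Then ℙ( A·ρ·X₂ ≥ u·(B·ρ·X₁ + η·ρ·Z + 1) ) = ( A·λ₂/(A·λ₂ + B·u·λ₁) ) · exp( −u/(A·λ₂·ρ) ) · 𝔼[ exp( −η·u·Z/(A·λ₂) ) ]. -/
/-!
Condition on `(X₁, Z)`: given it, the event says that the exponential variable `X₂` exceeds the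
nonnegative threshold `T = u (B ρ X₁ + η ρ Z + 1) / (A ρ)`, which has conditional probability
`exp (-T / λ₂)`. Hence the probability is `𝔼[exp (-T / λ₂)]`, and since `T` is affine in the
independent variables `X₁` and `Z`, this expectation factors into the constant `exp (-u / (A λ₂ ρ))`,
the Laplace transform `A λ₂ / (A λ₂ + B u λ₁)` of `X₁` at `B u / (A λ₂)`, and `𝔼[exp (-η u Z / (A λ₂))]`.
-/

open MeasureTheory ProbabilityTheory Real Set

/-- A real random variable `X` is exponentially distributed with mean `lam > 0` if its law has
density `(1/lam) * exp (-x/lam)` on `[0, ∞)` and `0` on `(-∞, 0)`. -/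
def HasExpLaw {Ω : Type*} [MeasurableSpace Ω] (P : Measure Ω) (X : Ω → ℝ) (lam : ℝ) : Prop :=
  Measurable X ∧
    P.map X = MeasureTheory.volume.withDensity
      (fun x => ENNReal.ofReal (if 0 ≤ x then (1 / lam) * Real.exp (-x / lam) else 0))

namespace ProbabilityTheory

lemma expMeasure_eq_withDensity (r : ℝ) :
    expMeasure r = volume.withDensity (exponentialPDF r) := rfl

instance (r : ℝ) : NullSingletonClass (expMeasure r) := by
  rw [expMeasure_eq_withDensity]
  infer_instance

lemma ae_nonneg_expMeasure (r : ℝ) : ∀ᵐ x ∂expMeasure r, 0 ≤ x := by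
  refine ae_iff.2 ?_
  simp_rw [not_le]
  change expMeasure r (Iio 0) = 0
  rw [expMeasure_eq_withDensity, withDensity_apply _ measurableSet_Iio,
    setLIntegral_congr_fun measurableSet_Iio fun _ hx ↦ exponentialPDF_of_neg hx, lintegral_zero]

lemma expMeasure_Ici {r t : ℝ} (hr : 0 < r) (ht : 0 ≤ t) :
    expMeasure r (Ici t) = ENNReal.ofReal (exp (-(r * t))) := by
  have := isProbabilityMeasure_expMeasure hr
  have hcdf : 0 ≤ 1 - exp (-(r * t)) :=
    sub_nonneg.2 <| exp_le_one_iff.2 <| neg_nonpos.2 <| by positivity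
  rw [← measure_congr Ioi_ae_eq_Ici, ← compl_Iic, prob_compl_eq_one_sub measurableSet_Iic,
    ← ofReal_cdf, cdf_expMeasure_eq hr, if_pos ht, ← ENNReal.ofReal_one,
    ← ENNReal.ofReal_sub _ hcdf, sub_sub_cancel]

lemma lintegral_exp_neg_mul_expMeasure {r c : ℝ} (hr : 0 < r) (hc : 0 ≤ c) :
    ∫⁻ x, ENNReal.ofReal (exp (-(c * x))) ∂expMeasure r = ENNReal.ofReal (r / (r + c)) := by
  have hrc : 0 < r + c := by positivity
  have hpdf (s : ℝ) : Measurable (exponentialPDF s) :=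
    (measurable_exponentialPDFReal s).ennreal_ofReal
  -- tilting the exponential density of rate `r` by `exp (-c x)` gives the one of rate `r + c`
  have htilt (x : ℝ) : exponentialPDF r x * ENNReal.ofReal (exp (-(c * x)))
      = ENNReal.ofReal (r / (r + c)) * exponentialPDF (r + c) x := by
    simp only [exponentialPDF_eq]
    split_ifs
    · rw [← ENNReal.ofReal_mul (by positivity), ← ENNReal.ofReal_mul (by positivity), mul_assoc,
        ← exp_add, ← mul_assoc, div_mul_cancel₀ _ hrc.ne']
      ring_nf
    · simp
  rw [expMeasure_eq_withDensity, lintegral_withDensity_eq_lintegral_mul _ (hpdf r) (by fun_prop)]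
  simp only [Pi.mul_apply, htilt]
  rw [lintegral_const_mul _ (hpdf _), lintegral_exponentialPDF_eq_one hrc, mul_one]

lemma integral_exp_neg_mul_expMeasure {r c : ℝ} (hr : 0 < r) (hc : 0 ≤ c) :
    ∫ x, exp (-(c * x)) ∂expMeasure r = r / (r + c) := by
  rw [integral_eq_lintegral_of_nonneg_ae (.of_forall fun _ ↦ (exp_pos _).le) (by fun_prop),
    lintegral_exp_neg_mul_expMeasure hr hc, ENNReal.toReal_ofReal (by positivity)]

variable {Ω : Type*} [MeasurableSpace Ω] {P : Measure Ω} [IsProbabilityMeasure P]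

lemma IndepFun.measureReal_le_of_map_eq_expMeasure {T Y : Ω → ℝ} {r : ℝ} (hr : 0 < r)
    (hT : Measurable T) (hY : Measurable Y) (hTY : IndepFun T Y P)
    (hYlaw : P.map Y = expMeasure r) (hT0 : ∀ᵐ ω ∂P, 0 ≤ T ω) :
    P.real {ω | T ω ≤ Y ω} = ∫ ω, exp (-(r * T ω)) ∂P := by
  have := isProbabilityMeasure_expMeasure hr
  have hS : MeasurableSet {p : ℝ × ℝ | p.1 ≤ p.2} := measurableSet_le measurable_fst measurable_snd
  have hmap : P.map (fun ω ↦ (T ω, Y ω)) = (P.map T).prod (expMeasure r) := by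
    rw [← hYlaw]
    exact (indepFun_iff_map_prod_eq_prod_map_map hT.aemeasurable hY.aemeasurable).mp hTY
  have hsection : ∀ᵐ t ∂P.map T, expMeasure r (Prod.mk t ⁻¹' {p : ℝ × ℝ | p.1 ≤ p.2})
      = ENNReal.ofReal (exp (-(r * t))) := by
    filter_upwards [(ae_map_iff hT.aemeasurable measurableSet_Ici).2 hT0] with t ht
    exact expMeasure_Ici hr ht
  have hevent : P {ω | T ω ≤ Y ω} = ∫⁻ ω, ENNReal.ofReal (exp (-(r * T ω))) ∂P := by
    change P ((fun ω ↦ (T ω, Y ω)) ⁻¹' {p : ℝ × ℝ | p.1 ≤ p.2}) = _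
    rw [← Measure.map_apply (hT.prodMk hY) hS, hmap, Measure.prod_apply hS,
      lintegral_congr_ae hsection, lintegral_map (by fun_prop) hT]
  rw [measureReal_def, hevent, integral_eq_lintegral_of_nonneg_ae
    (.of_forall fun _ ↦ (exp_pos _).le) (by fun_prop)]

end ProbabilityTheory

namespace HasExpLaw

variable {Ω : Type*} [MeasurableSpace Ω] {P : Measure Ω} {X : Ω → ℝ} {lam : ℝ}

lemma map_eq_expMeasure (hX : HasExpLaw P X lam) : P.map X = expMeasure lam⁻¹ := by
  rw [hX.2, expMeasure_eq_withDensity]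
  congr with x
  rw [exponentialPDF_eq, one_div, neg_div, div_eq_inv_mul]

lemma ae_nonneg (hX : HasExpLaw P X lam) : ∀ᵐ ω ∂P, 0 ≤ X ω := by
  have := ae_nonneg_expMeasure lam⁻¹
  rw [← hX.map_eq_expMeasure] at this
  exact (ae_map_iff hX.1.aemeasurable measurableSet_Ici).1 this

lemma integral_exp_neg_mul (hX : HasExpLaw P X lam) (hlam : 0 < lam) {c : ℝ} (hc : 0 ≤ c) :
    ∫ ω, exp (-(c * X ω)) ∂P = 1 / (1 + c * lam) := by
  rw [← integral_map (f := fun x ↦ exp (-(c * x))) hX.1.aemeasurable (by fun_prop),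
    hX.map_eq_expMeasure, integral_exp_neg_mul_expMeasure (inv_pos.2 hlam) hc]
  field_simp

end HasExpLaw

theorem stmt_4 {Ω : Type*} [MeasurableSpace Ω] (P : Measure Ω) [IsProbabilityMeasure P]
    (lam₁ lam₂ A B η ρ u : ℝ) (hlam₁ : 0 < lam₁) (hlam₂ : 0 < lam₂)
    (hA : 0 < A) (hB : 0 < B) (hη : 0 < η) (hρ : 0 < ρ) (hu : 0 < u)
    (X₁ X₂ Z : Ω → ℝ)
    (hX₁ : HasExpLaw P X₁ lam₁) (hX₂ : HasExpLaw P X₂ lam₂)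
    (hZmeas : Measurable Z) (hZnonneg : ∀ ω, 0 ≤ Z ω)
    (hindep : iIndepFun ![X₁, X₂, Z] P) :
    (P {ω | A * ρ * X₂ ω ≥ u * (B * ρ * X₁ ω + η * ρ * Z ω + 1)}).toReal =
      (A * lam₂ / (A * lam₂ + B * u * lam₁)) * Real.exp (-u / (A * lam₂ * ρ)) *
        ∫ ω, Real.exp (-(η * u * Z ω) / (A * lam₂)) ∂P := by
  have hX₁m : Measurable X₁ := hX₁.1
  have hmeas : ∀ i, Measurable (![X₁, X₂, Z] i) := by
    simp [Fin.forall_fin_succ, hX₁m, hX₂.1, hZmeas]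
  have hX₁Z : IndepFun X₁ Z P := by
    simpa using hindep.indepFun (show (0 : Fin 3) ≠ 2 by decide)
  have hX₁Z_X₂ : IndepFun (fun ω ↦ (X₁ ω, Z ω)) X₂ P := by
    simpa using hindep.indepFun_prodMk hmeas 0 2 1 (by decide) (by decide)
  have hTX₂ : IndepFun (fun ω ↦ u * (B * ρ * X₁ ω + η * ρ * Z ω + 1) / (A * ρ)) X₂ P :=
    hX₁Z_X₂.comp (φ := fun p : ℝ × ℝ ↦ u * (B * ρ * p.1 + η * ρ * p.2 + 1) / (A * ρ)) (ψ := id)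
      (by fun_prop) measurable_id
  have hevent : {ω | A * ρ * X₂ ω ≥ u * (B * ρ * X₁ ω + η * ρ * Z ω + 1)}
      = {ω | u * (B * ρ * X₁ ω + η * ρ * Z ω + 1) / (A * ρ) ≤ X₂ ω} :=
    Set.ext fun _ ↦ (div_le_iff₀' (by positivity : 0 < A * ρ)).symm
  have hT0 : ∀ᵐ ω ∂P, 0 ≤ u * (B * ρ * X₁ ω + η * ρ * Z ω + 1) / (A * ρ) := by
    filter_upwards [hX₁.ae_nonneg] with ω hω
    have := hZnonneg ω
    positivity
  have hfactor (ω : Ω) : exp (-(lam₂⁻¹ * (u * (B * ρ * X₁ ω + η * ρ * Z ω + 1) / (A * ρ)))) =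
      exp (-u / (A * lam₂ * ρ)) *
        (exp (-(B * u / (A * lam₂) * X₁ ω)) * exp (-(η * u * Z ω) / (A * lam₂))) := by
    rw [← exp_add, ← exp_add]
    congr 1
    field_simp
    ring
  rw [hevent, ← measureReal_def, hTX₂.measureReal_le_of_map_eq_expMeasure (inv_pos.2 hlam₂)
    (by fun_prop) hX₂.1 hX₂.map_eq_expMeasure hT0]
  simp_rw [hfactor]
  rw [integral_const_mul, hX₁Z.integral_fun_comp_mul_comp
    (f := fun x ↦ exp (-(B * u / (A * lam₂) * x))) (g := fun z ↦ exp (-(η * u * z) / (A * lam₂)))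
    hX₁m.aemeasurable hZmeas.aemeasurable (by fun_prop) (by fun_prop),
    hX₁.integral_exp_neg_mul hlam₁ (by positivity)]
  field_simp
end

section
/- Let X₁ and Z be independent real random variables, X₁ exponentially distributed with mean λ₁ > 0 and Z nonnegative. Let λ₂, A, B, ρ, η, k₂, u₁, u₂ > 0 with k₂·u₂·u₁ < 1, set C = B/(A·k₂·u₁) − B·u₂/A, D_Z = (1/C)·( η·Z/(A·k₂) + η·Z·u₂/A + u₂/(A·ρ) + 1/(A·ρ·k₂) ), and Q₁ = (1/λ₁ + B/(A·k₂·λ₂·u₁))·(η/(A·C·k₂) + η·u₂/(A·C)) − η/(A·k₂·λ₂). Then 𝔼[ 1{X₁ > D_Z} · exp( −(B·ρ·X₁ − η·ρ·Z·u₁ − u₁)/(A·ρ·k₂·λ₂·u₁) ) ] = ( A·k₂·λ₂·u₁/(A·k₂·λ₂·u₁ + B·λ₁) ) · exp( 1/(A·ρ·k₂·λ₂) ) · exp( −(1/λ₁ + B/(A·k₂·λ₂·u₁))·(u₂ + 1/k₂)/(A·C·ρ) ) · 𝔼[ exp(−Q₁·Z) ]. -/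
/-!
By independence, the expectation is an integral over the law of `Z` of the conditional
expectation given `Z = z`. For fixed `z` the integrand is `exp (a(z) - b x)`, with `a` affine,
on the half-line `x > D(z)`, where `D(z) = coef * z + c₀` is affine with nonnegative
coefficients because `k₂ u₂ u₁ < 1` makes `C` positive. Integrating against the exponential
density over that half-line gives `exp (a(z) - s D(z)) / (λ₁ s)` with `s = 1/λ₁ + b`, which is
a constant times `exp (-Q₁ z)`.
-/

open MeasureTheory ProbabilityTheory Real

open Set

lemma lintegral_Ioi_ofReal_exp_mul {a : ℝ} (ha : a < 0) (c : ℝ) :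
    ∫⁻ x in Ioi c, ENNReal.ofReal (exp (a * x)) = ENNReal.ofReal (-exp (a * c) / a) := by
  rw [← integral_exp_mul_Ioi ha c,
    ofReal_integral_eq_lintegral_ofReal (integrableOn_exp_mul_Ioi ha c)
      (ae_of_all _ fun _ ↦ (exp_pos _).le)]

lemma HasExpLaw.lintegral_map_ite_exp {Ω : Type*} [MeasurableSpace Ω] {P : Measure Ω}
    {X : Ω → ℝ} {lam : ℝ} (hX : HasExpLaw P X lam) (hlam : 0 < lam) {d : ℝ} (hd : 0 ≤ d)
    (a : ℝ) {b : ℝ} (hb : 0 < 1 / lam + b) :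
    ∫⁻ x, ENNReal.ofReal (if d < x then exp (a - b * x) else 0) ∂P.map X =
      ENNReal.ofReal (exp (a - (1 / lam + b) * d) / (lam * (1 / lam + b))) := by
  have hdensity_mul : ∀ x,
      ENNReal.ofReal (if 0 ≤ x then 1 / lam * exp (-x / lam) else 0) *
          ENNReal.ofReal (if d < x then exp (a - b * x) else 0) =
        (Ioi d).indicator
          (fun x ↦ ENNReal.ofReal (exp a / lam) * ENNReal.ofReal (exp (-(1 / lam + b) * x))) x := by
    intro x
    by_cases hx : d < x
    · rw [indicator_of_mem (mem_Ioi.2 hx), if_pos (hd.trans hx.le), if_pos hx,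
        ← ENNReal.ofReal_mul (by positivity), ← ENNReal.ofReal_mul (by positivity)]
      congr 1
      rw [mul_assoc, ← exp_add, show -x / lam + (a - b * x) = a + -(1 / lam + b) * x by ring,
        exp_add]
      ring
    · rw [indicator_of_notMem (mt mem_Ioi.1 hx), if_neg hx, ENNReal.ofReal_zero, mul_zero]
  rw [hX.2, lintegral_withDensity_eq_lintegral_mul _
    (Measurable.ite measurableSet_Ici (by fun_prop) measurable_const).ennreal_ofReal
    (Measurable.ite measurableSet_Ioi (by fun_prop) measurable_const).ennreal_ofReal]
  simp_rw [Pi.mul_apply, hdensity_mul]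
  rw [lintegral_indicator measurableSet_Ioi, lintegral_const_mul _ (by fun_prop),
    lintegral_Ioi_ofReal_exp_mul (by linarith), ← ENNReal.ofReal_mul (by positivity)]
  congr 1
  rw [neg_div_neg_eq, sub_eq_add_neg, exp_add, neg_mul]
  field_simp

lemma ProbabilityTheory.IndepFun.integral_comp_eq_integral_of_lintegral_map
    {Ω α β : Type*} [MeasurableSpace Ω] [MeasurableSpace α] [MeasurableSpace β]
    {P : Measure Ω} [IsFiniteMeasure P] {X : Ω → α} {Y : Ω → β} (hXY : IndepFun X Y P)
    (hX : Measurable X) (hY : Measurable Y)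
    {f : α × β → ℝ} (hf : Measurable f) (hf_nonneg : ∀ p, 0 ≤ f p)
    {g : β → ℝ} (hg : Measurable g) (hg_nonneg : ∀ y, 0 ≤ g y)
    (hfg : ∀ᵐ ω ∂P, ∫⁻ x, ENNReal.ofReal (f (x, Y ω)) ∂P.map X = ENNReal.ofReal (g (Y ω))) :
    ∫ ω, f (X ω, Y ω) ∂P = ∫ ω, g (Y ω) ∂P := by
  rw [integral_eq_lintegral_of_nonneg_ae (ae_of_all _ fun _ ↦ hf_nonneg _)
      (hf.comp (hX.prodMk hY)).aestronglyMeasurable,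
    integral_eq_lintegral_of_nonneg_ae (ae_of_all _ fun _ ↦ hg_nonneg _)
      (hg.comp hY).aestronglyMeasurable,
    ← lintegral_map hf.ennreal_ofReal (hX.prodMk hY),
    (indepFun_iff_map_prod_eq_prod_map_map hX.aemeasurable hY.aemeasurable).mp hXY,
    lintegral_prod_symm' _ hf.ennreal_ofReal,
    lintegral_map hf.ennreal_ofReal.lintegral_prod_left' hY, lintegral_congr_ae hfg]

lemma div_sub_div_pos_of_mul_lt_one {A B k u₁ u₂ : ℝ} (hA : 0 < A) (hB : 0 < B) (hk : 0 < k)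
    (hu₁ : 0 < u₁) (h : k * u₂ * u₁ < 1) : 0 < B / (A * k * u₁) - B * u₂ / A := by
  rw [sub_pos, div_lt_div_iff₀ hA (by positivity)]
  nlinarith [mul_lt_mul_of_pos_left h (mul_pos hA hB)]

theorem stmt_8 {Ω : Type*} [MeasurableSpace Ω] (P : Measure Ω) [IsProbabilityMeasure P]
    (lam₁ lam₂ A B ρ η k₂ u₁ u₂ : ℝ)
    (hlam₁ : 0 < lam₁) (hlam₂ : 0 < lam₂) (hA : 0 < A) (hB : 0 < B) (hρ : 0 < ρ)
    (hη : 0 < η) (hk₂ : 0 < k₂) (hu₁ : 0 < u₁) (hu₂ : 0 < u₂)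
    (hcond : k₂ * u₂ * u₁ < 1)
    (X₁ Z : Ω → ℝ) (hX₁ : HasExpLaw P X₁ lam₁)
    (hZmeas : Measurable Z) (hZnonneg : ∀ ω, 0 ≤ Z ω)
    (hindep : IndepFun X₁ Z P)
    (C : ℝ) (hC : C = B / (A * k₂ * u₁) - B * u₂ / A)
    (DZ : Ω → ℝ)
    (hDZ : ∀ ω, DZ ω = (1 / C) * (η * Z ω / (A * k₂) + η * Z ω * u₂ / A +
        u₂ / (A * ρ) + 1 / (A * ρ * k₂)))
    (Q₁ : ℝ)
    (hQ₁ : Q₁ = (1 / lam₁ + B / (A * k₂ * lam₂ * u₁)) *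
        (η / (A * C * k₂) + η * u₂ / (A * C)) - η / (A * k₂ * lam₂)) :
    (∫ ω, (if DZ ω < X₁ ω then
        Real.exp (-(B * ρ * X₁ ω - η * ρ * Z ω * u₁ - u₁) / (A * ρ * k₂ * lam₂ * u₁))
      else 0) ∂P) =
      (A * k₂ * lam₂ * u₁ / (A * k₂ * lam₂ * u₁ + B * lam₁)) *
        Real.exp (1 / (A * ρ * k₂ * lam₂)) *
        Real.exp (-(1 / lam₁ + B / (A * k₂ * lam₂ * u₁)) * (u₂ + 1 / k₂) / (A * C * ρ)) *
        ∫ ω, Real.exp (-Q₁ * Z ω) ∂P := by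
  have hC_pos : 0 < C := hC ▸ div_sub_div_pos_of_mul_lt_one hA hB hk₂ hu₁ hcond
  set b := B / (A * k₂ * lam₂ * u₁) with hb
  set coef := η / (A * C * k₂) + η * u₂ / (A * C) with hcoef
  set c₀ := (u₂ + 1 / k₂) / (A * C * ρ) with hc₀
  set K := A * k₂ * lam₂ * u₁ / (A * k₂ * lam₂ * u₁ + B * lam₁) *
    exp (1 / (A * ρ * k₂ * lam₂)) * exp (-(1 / lam₁ + b) * (u₂ + 1 / k₂) / (A * C * ρ))
  have hDZ_affine : ∀ ω, DZ ω = coef * Z ω + c₀ := fun ω ↦ by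
    rw [hDZ, hcoef, hc₀]; field_simp; ring
  have hexponent : ∀ x z, -(B * ρ * x - η * ρ * z * u₁ - u₁) / (A * ρ * k₂ * lam₂ * u₁) =
      η / (A * k₂ * lam₂) * z + 1 / (A * ρ * k₂ * lam₂) - b * x := fun x z ↦ by
    rw [hb]; field_simp; ring
  set F : ℝ × ℝ → ℝ := fun p ↦ if coef * p.2 + c₀ < p.1 then
    exp (η / (A * k₂ * lam₂) * p.2 + 1 / (A * ρ * k₂ * lam₂) - b * p.1) else 0
  have hF_meas : Measurable F :=
    Measurable.ite (measurableSet_lt (by fun_prop) measurable_fst) (by fun_prop) measurable_const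
  have hinner : ∀ z, 0 ≤ z →
      ∫⁻ x, ENNReal.ofReal (F (x, z)) ∂P.map X₁ = ENNReal.ofReal (K * exp (-Q₁ * z)) := by
    intro z hz
    simp only [F]
    rw [hX₁.lintegral_map_ite_exp hlam₁ (by positivity) _ (by positivity)]
    have hratio : 1 / (lam₁ * (1 / lam₁ + b)) =
        A * k₂ * lam₂ * u₁ / (A * k₂ * lam₂ * u₁ + B * lam₁) := by
      rw [hb]; field_simp
    have hexp :
        η / (A * k₂ * lam₂) * z + 1 / (A * ρ * k₂ * lam₂) - (1 / lam₁ + b) * (coef * z + c₀) =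
          1 / (A * ρ * k₂ * lam₂) + -(1 / lam₁ + b) * (u₂ + 1 / k₂) / (A * C * ρ) + -Q₁ * z := by
      rw [hQ₁, hc₀]; ring
    rw [div_eq_mul_one_div, hratio, hexp, exp_add, exp_add]
    simp only [K]
    congr 1
    ring
  calc _ = ∫ ω, F (X₁ ω, Z ω) ∂P := by simp only [F, hDZ_affine, hexponent]
    _ = ∫ ω, K * exp (-Q₁ * Z ω) ∂P :=
      hindep.integral_comp_eq_integral_of_lintegral_map (g := fun z ↦ K * exp (-Q₁ * z))
        hX₁.1 hZmeas hF_meas (fun _ ↦ by positivity) (by fun_prop) (fun _ ↦ by positivity)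
        (ae_of_all _ fun ω ↦ hinner _ (hZnonneg ω))
    _ = _ := integral_const_mul _ _
end

section
/- Let X₁ and Z be independent real random variables, X₁ exponentially distributed with mean λ₁ > 0 and Z nonnegative. Let λ₂, A, B, ρ, η, k₂, u₁, u₂ > 0 with k₂·u₂·u₁ < 1, set C = B/(A·k₂·u₁) − B·u₂/A, D_Z = (1/C)·( η·Z/(A·k₂) + η·Z·u₂/A + u₂/(A·ρ) + 1/(A·ρ·k₂) ), and Q₂ = η·u₂/(A·λ₂) + (B·u₂/(A·λ₂) + 1/λ₁)·(η/(A·C·k₂) + η·u₂/(A·C)). Then 𝔼[ 1{X₁ > D_Z} · exp( −(B·ρ·X₁·u₂ + η·ρ·Z·u₂ + u₂)/(A·λ₂·ρ) ) ] = ( A·λ₂/(B·u₂·λ₁ + A·λ₂) ) · exp( −u₂/(A·λ₂·ρ) ) · exp( −(B·u₂/(A·λ₂) + 1/λ₁)·( u₂/(A·C·ρ) + 1/(A·C·k₂·ρ) ) ) · 𝔼[ exp(−Q₂·Z) ]. -/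
/-!
Writing the integrand as `exp (-c) · 1{α Z + β < X₁} · exp (-(a X₁ + b Z))`, independence turns
the expectation into an iterated integral. For fixed `Z = z ≥ 0` the inner integral against the
exponential density is an exponential tail, `exp (-(a + 1/λ₁) (α z + β)) / (1 + a λ₁)`, and
since the threshold is affine in `z` the outer integral is the Laplace transform of `Z` at
`Q₂ = b + (a + 1/λ₁) α`.
-/

open MeasureTheory ProbabilityTheory Real

open Set

theorem integral_Ioi_exp_neg_mul {r : ℝ} (hr : 0 < r) (t : ℝ) :
    ∫ x in Ioi t, exp (-r * x) = exp (-r * t) / r := by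
  rw [integral_exp_mul_Ioi (neg_neg_of_pos hr), div_neg, neg_div, neg_neg]

namespace HasExpLaw

variable {Ω : Type*} [MeasurableSpace Ω] {P : Measure Ω} {X : Ω → ℝ} {lam : ℝ}

theorem integral_map_eq_integral_density (hX : HasExpLaw P X lam) (hlam : 0 < lam) (g : ℝ → ℝ) :
    ∫ x, g x ∂(P.map X) = ∫ x, (if 0 ≤ x then lam⁻¹ * exp (-x / lam) else 0) * g x := by
  have hdens : Measurable fun x : ℝ => if 0 ≤ x then (1 / lam) * exp (-x / lam) else 0 :=
    Measurable.ite measurableSet_Ici (by fun_prop) measurable_const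
  rw [hX.2, integral_withDensity_eq_integral_toReal_smul hdens.ennreal_ofReal
    (Filter.Eventually.of_forall fun _ => ENNReal.ofReal_lt_top)]
  congr 1 with x
  rw [ENNReal.toReal_ofReal (by positivity), smul_eq_mul, one_div]

theorem integral_map_ite_lt (hX : HasExpLaw P X lam) (hlam : 0 < lam) {t a : ℝ} (ht : 0 ≤ t)
    (ha : -lam⁻¹ < a) :
    ∫ x, (if t < x then exp (-(a * x)) else 0) ∂(P.map X) =
      exp (-(a + lam⁻¹) * t) / (1 + a * lam) := by
  have hr : 0 < a + lam⁻¹ := by linarith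
  have hintegrand : (fun x => (if 0 ≤ x then lam⁻¹ * exp (-x / lam) else 0) *
      (if t < x then exp (-(a * x)) else 0)) =
      (Ioi t).indicator fun x => lam⁻¹ * exp (-(a + lam⁻¹) * x) := by
    ext x
    by_cases hx : t < x
    · rw [indicator_of_mem (mem_Ioi.2 hx), if_pos (ht.trans hx.le), if_pos hx, mul_assoc,
        ← exp_add]
      congr 2
      ring
    · simp [hx]
  rw [hX.integral_map_eq_integral_density hlam, hintegrand, integral_indicator measurableSet_Ioi,
    integral_const_mul, integral_Ioi_exp_neg_mul hr]
  field_simp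
  ring

end HasExpLaw

theorem ProbabilityTheory.IndepFun.integral_comp_eq_integral_integral {Ω α β : Type*}
    [MeasurableSpace Ω] [MeasurableSpace α] [MeasurableSpace β] {P : Measure Ω}
    [IsFiniteMeasure P] {X : Ω → α} {Y : Ω → β} (hXY : IndepFun X Y P) (hX : Measurable X)
    (hY : Measurable Y) {g : α × β → ℝ} (hg : Measurable g)
    (hgi : Integrable (fun ω => g (X ω, Y ω)) P) :
    ∫ ω, g (X ω, Y ω) ∂P = ∫ y, ∫ x, g (x, y) ∂(P.map X) ∂(P.map Y) := by
  have hXYm : Measurable fun ω => (X ω, Y ω) := hX.prodMk hY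
  have hmap := (indepFun_iff_map_prod_eq_prod_map_map hX.aemeasurable hY.aemeasurable).1 hXY
  rw [← integral_map hXYm.aemeasurable hg.aestronglyMeasurable, hmap]
  refine integral_prod_symm g ?_
  rw [← hmap, integrable_map_measure hg.aestronglyMeasurable hXYm.aemeasurable]
  exact hgi

theorem integral_ite_lt_exp_of_hasExpLaw {Ω : Type*} [MeasurableSpace Ω] {P : Measure Ω}
    [IsFiniteMeasure P] {X Z : Ω → ℝ} {lam α β a b : ℝ} (hX : HasExpLaw P X lam) (hlam : 0 < lam)
    (hZ : Measurable Z) (hZ₀ : ∀ ω, 0 ≤ Z ω) (hXZ : IndepFun X Z P) (hα : 0 ≤ α) (hβ : 0 ≤ β)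
    (ha : 0 ≤ a) (hb : 0 ≤ b) :
    ∫ ω, (if α * Z ω + β < X ω then exp (-(a * X ω + b * Z ω)) else 0) ∂P =
      exp (-(a + lam⁻¹) * β) / (1 + a * lam) * ∫ ω, exp (-(b + (a + lam⁻¹) * α) * Z ω) ∂P := by
  set g : ℝ × ℝ → ℝ := fun p => if α * p.2 + β < p.1 then exp (-(a * p.1 + b * p.2)) else 0
  have hg : Measurable g :=
    Measurable.ite (measurableSet_lt (by fun_prop) measurable_fst) (by fun_prop) measurable_const
  have hgi : Integrable (fun ω => g (X ω, Z ω)) P := by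
    refine Integrable.of_bound (hg.comp (hX.1.prodMk hZ)).aestronglyMeasurable 1
      (Filter.Eventually.of_forall fun ω => ?_)
    simp only [g]
    split_ifs with h
    · have hX₀ : 0 ≤ X ω := by nlinarith [hZ₀ ω]
      rw [norm_of_nonneg (exp_nonneg _), exp_le_one_iff]
      nlinarith [hZ₀ ω]
    · simp
  have hinner : ∀ z, 0 ≤ z → ∫ x, g (x, z) ∂(P.map X) =
      exp (-(a + lam⁻¹) * β) / (1 + a * lam) * exp (-(b + (a + lam⁻¹) * α) * z) := by
    intro z hz
    have hsection : (fun x => g (x, z)) =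
        fun x => exp (-(b * z)) * if α * z + β < x then exp (-(a * x)) else 0 := by
      ext x
      simp only [g]
      split_ifs
      · rw [← exp_add]; ring_nf
      · simp
    rw [hsection, integral_const_mul, hX.integral_map_ite_lt hlam (by positivity) (by
      have := inv_pos.2 hlam; linarith)]
    rw [← mul_div_assoc, div_mul_eq_mul_div, ← exp_add, ← exp_add]
    ring_nf
  have hZ₀' : ∀ᵐ z ∂(P.map Z), 0 ≤ z :=
    (ae_map_iff hZ.aemeasurable measurableSet_Ici).2 (Filter.Eventually.of_forall hZ₀)
  rw [hXZ.integral_comp_eq_integral_integral hX.1 hZ hg hgi, integral_congr_ae (hZ₀'.mono hinner),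
    integral_const_mul, integral_map hZ.aemeasurable (by fun_prop)]

theorem stmt_9 {Ω : Type*} [MeasurableSpace Ω] (P : Measure Ω) [IsProbabilityMeasure P]
    (lam₁ lam₂ A B ρ η k₂ u₁ u₂ : ℝ)
    (hlam₁ : 0 < lam₁) (hlam₂ : 0 < lam₂) (hA : 0 < A) (hB : 0 < B) (hρ : 0 < ρ)
    (hη : 0 < η) (hk₂ : 0 < k₂) (hu₁ : 0 < u₁) (hu₂ : 0 < u₂)
    (hcond : k₂ * u₂ * u₁ < 1)
    (X₁ Z : Ω → ℝ) (hX₁ : HasExpLaw P X₁ lam₁)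
    (hZmeas : Measurable Z) (hZnonneg : ∀ ω, 0 ≤ Z ω)
    (hindep : IndepFun X₁ Z P)
    (C : ℝ) (hC : C = B / (A * k₂ * u₁) - B * u₂ / A)
    (DZ : Ω → ℝ)
    (hDZ : ∀ ω, DZ ω = (1 / C) * (η * Z ω / (A * k₂) + η * Z ω * u₂ / A +
        u₂ / (A * ρ) + 1 / (A * ρ * k₂)))
    (Q₂ : ℝ)
    (hQ₂ : Q₂ = η * u₂ / (A * lam₂) +
        (B * u₂ / (A * lam₂) + 1 / lam₁) * (η / (A * C * k₂) + η * u₂ / (A * C))) :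
    (∫ ω, (if DZ ω < X₁ ω then
        Real.exp (-(B * ρ * X₁ ω * u₂ + η * ρ * Z ω * u₂ + u₂) / (A * lam₂ * ρ))
      else 0) ∂P) =
      (A * lam₂ / (B * u₂ * lam₁ + A * lam₂)) * Real.exp (-u₂ / (A * lam₂ * ρ)) *
        Real.exp (-(B * u₂ / (A * lam₂) + 1 / lam₁) *
          (u₂ / (A * C * ρ) + 1 / (A * C * k₂ * ρ))) *
        ∫ ω, Real.exp (-Q₂ * Z ω) ∂P := by
  have hCpos : 0 < C := by
    have : C = B * (1 - k₂ * u₂ * u₁) / (A * k₂ * u₁) := by rw [hC]; field_simp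
    rw [this]
    exact div_pos (mul_pos hB (by linarith)) (by positivity)
  set α := (η / (A * k₂) + η * u₂ / A) / C
  set β := (u₂ / (A * ρ) + 1 / (A * ρ * k₂)) / C
  set a := B * u₂ / (A * lam₂)
  set b := η * u₂ / (A * lam₂)
  have hintegrand : ∀ ω, (if DZ ω < X₁ ω then
      exp (-(B * ρ * X₁ ω * u₂ + η * ρ * Z ω * u₂ + u₂) / (A * lam₂ * ρ)) else 0) =
      exp (-u₂ / (A * lam₂ * ρ)) *
        if α * Z ω + β < X₁ ω then exp (-(a * X₁ ω + b * Z ω)) else 0 := by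
    intro ω
    rw [show DZ ω = α * Z ω + β by rw [hDZ]; ring, mul_ite, mul_zero, ← exp_add]
    congr 2
    simp only [a, b]
    field_simp
    ring
  rw [integral_congr_ae (Filter.Eventually.of_forall hintegrand), integral_const_mul,
    integral_ite_lt_exp_of_hasExpLaw hX₁ hlam₁ hZmeas hZnonneg hindep (by positivity)
      (by positivity) (by positivity) (by positivity)]
  have hQ : Q₂ = b + (a + lam₁⁻¹) * α := by rw [hQ₂]; simp only [α]; field_simp
  have hβ : (a + lam₁⁻¹) * β = (a + 1 / lam₁) * (u₂ / (A * C * ρ) + 1 / (A * C * k₂ * ρ)) := by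
    simp only [β]; field_simp
  have hfactor : 1 / (1 + a * lam₁) = A * lam₂ / (B * u₂ * lam₁ + A * lam₂) := by
    simp only [a]; field_simp; ring
  rw [hQ, ← hfactor, neg_mul, hβ, neg_mul]
  ring
end

section
/- Let X₁, X₂ and Z be mutually independent real random variables, where X₁ is exponentially distributed with mean λ₁ > 0, X₂ is exponentially distributed with mean λ₂ > 0, and Z is nonnegative. Let A, B, ρ, η, u₁, u₂ > 0 and set Q₁ᵖ = η·u₂/(A·λ₂) + (1/λ₁ + B·u₂/(A·λ₂))·η·u₁/B. Then ℙ( X₂ > (B·ρ·X₁·u₂ + η·ρ·Z·u₂ + u₂)/(A·ρ) and X₁ > (η·ρ·Z·u₁ + u₁)/(B·ρ) ) = ( A·λ₂/(A·λ₂ + B·u₂·λ₁) ) · exp( −u₂/(A·λ₂·ρ) − (1/λ₁ + B·u₂/(A·λ₂))·u₁/(B·ρ) ) · 𝔼[ exp(−Q₁ᵖ·Z) ]. -/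
/-!
Conditionally on `Z = z`, the event is the wedge `{x₁ > b, x₂ > α x₁ + β}` with `α = B u₂ / A`
and `b, β` affine in `z`. Integrating out `x₂` leaves its exponential tail
`exp (-(α x₁ + β) / λ₂)`; integrating this against the density of `x₁` over `(b, ∞)` gives
`λ₂ / (λ₂ + α λ₁) · exp (-β / λ₂ - (1 / λ₁ + α / λ₂) b)`, whose dependence on `z` is exactly the
factor `exp (-Q₁ᵖ z)`. Independence of `Z` from `(X₁, X₂)` turns the probability into the
expectation of this over `Z`.
-/

open MeasureTheory ProbabilityTheory Real

open Set

noncomputable def expLaw (lam : ℝ) : Measure ℝ :=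
  volume.withDensity fun x => ENNReal.ofReal (if 0 ≤ x then (1 / lam) * exp (-x / lam) else 0)

lemma HasExpLaw.map_eq_expLaw {Ω : Type*} [MeasurableSpace Ω] {P : Measure Ω} {X : Ω → ℝ}
    {lam : ℝ} (h : HasExpLaw P X lam) : P.map X = expLaw lam :=
  h.2

instance (lam : ℝ) : SFinite (expLaw lam) :=
  inferInstanceAs (SFinite (volume.withDensity _))

lemma lintegral_Ioi_ofReal_exp_neg_mul {c : ℝ} (hc : 0 < c) (a : ℝ) :
    ∫⁻ x in Ioi a, ENNReal.ofReal (exp (-c * x)) = ENNReal.ofReal (exp (-c * a) / c) := by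
  rw [← ofReal_integral_eq_lintegral_ofReal (exp_neg_integrableOn_Ioi a hc)
    (Filter.Eventually.of_forall fun x => (exp_pos _).le),
    integral_exp_mul_Ioi (neg_neg_of_pos hc), neg_div_neg_eq]

lemma setLIntegral_Ioi_exp_neg_mul_expLaw {lam k a : ℝ} (hlam : 0 < lam) (hk : 0 ≤ k)
    (ha : 0 ≤ a) :
    ∫⁻ x in Ioi a, ENNReal.ofReal (exp (-k * x)) ∂expLaw lam =
      ENNReal.ofReal (exp (-(1 / lam + k) * a) / (1 + k * lam)) := by
  have hdensity : ∀ x ∈ Ioi a,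
      ENNReal.ofReal (if 0 ≤ x then (1 / lam) * exp (-x / lam) else 0) *
          ENNReal.ofReal (exp (-k * x)) =
        ENNReal.ofReal (1 / lam) * ENNReal.ofReal (exp (-(1 / lam + k) * x)) := by
    intro x hx
    rw [if_pos (ha.trans (le_of_lt hx)), ← ENNReal.ofReal_mul (by positivity),
      ← ENNReal.ofReal_mul (by positivity), mul_assoc, ← exp_add]
    congr 3
    ring
  have hmeas : Measurable fun x : ℝ =>
      ENNReal.ofReal (if 0 ≤ x then (1 / lam) * exp (-x / lam) else 0) :=
    (Measurable.ite measurableSet_Ici (by fun_prop) (by fun_prop)).ennreal_ofReal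
  rw [expLaw, setLIntegral_withDensity_eq_setLIntegral_mul _ hmeas (by fun_prop)
    measurableSet_Ioi]
  simp only [Pi.mul_apply]
  rw [setLIntegral_congr_fun measurableSet_Ioi hdensity,
    lintegral_const_mul _ (by fun_prop), lintegral_Ioi_ofReal_exp_neg_mul (by positivity),
    ← ENNReal.ofReal_mul (by positivity)]
  congr 1
  field_simp

lemma expLaw_Ioi {lam t : ℝ} (hlam : 0 < lam) (ht : 0 ≤ t) :
    expLaw lam (Ioi t) = ENNReal.ofReal (exp (-t / lam)) := by
  simpa [neg_div, div_eq_inv_mul] using setLIntegral_Ioi_exp_neg_mul_expLaw hlam le_rfl ht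

lemma expLaw_prod_expLaw_wedge {lam₁ lam₂ α β b : ℝ} (hlam₁ : 0 < lam₁) (hlam₂ : 0 < lam₂)
    (hα : 0 ≤ α) (hβ : 0 ≤ β) (hb : 0 ≤ b) :
    (expLaw lam₁).prod (expLaw lam₂) {p | b < p.1 ∧ α * p.1 + β < p.2} =
      ENNReal.ofReal (lam₂ / (lam₂ + α * lam₁) * exp (-β / lam₂ - (1 / lam₁ + α / lam₂) * b)) := by
  have hsection : ∀ x, expLaw lam₂ (Prod.mk x ⁻¹' {p | b < p.1 ∧ α * p.1 + β < p.2}) =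
      (Ioi b).indicator
        (fun x => ENNReal.ofReal (exp (-β / lam₂)) * ENNReal.ofReal (exp (-(α / lam₂) * x))) x := by
    intro x
    by_cases hx : b < x
    · have : Prod.mk x ⁻¹' {p : ℝ × ℝ | b < p.1 ∧ α * p.1 + β < p.2} = Ioi (α * x + β) := by
        ext; simp [hx]
      rw [this, expLaw_Ioi hlam₂ (add_nonneg (mul_nonneg hα (hb.trans hx.le)) hβ),
        indicator_of_mem (mem_Ioi.2 hx), ← ENNReal.ofReal_mul (exp_pos _).le, ← exp_add]
      congr 2
      ring
    · have : Prod.mk x ⁻¹' {p : ℝ × ℝ | b < p.1 ∧ α * p.1 + β < p.2} = ∅ := by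
        ext; simp [hx]
      rw [this, measure_empty, indicator_of_notMem (mt mem_Ioi.1 hx)]
  have hS : MeasurableSet {p : ℝ × ℝ | b < p.1 ∧ α * p.1 + β < p.2} :=
    (measurableSet_lt measurable_const measurable_fst).inter
      (measurableSet_lt (by fun_prop) measurable_snd)
  rw [Measure.prod_apply hS,
    lintegral_congr hsection, lintegral_indicator measurableSet_Ioi,
    lintegral_const_mul _ (by fun_prop),
    setLIntegral_Ioi_exp_neg_mul_expLaw hlam₁ (by positivity) hb,
    ← ENNReal.ofReal_mul (exp_pos _).le]
  congr 1
  rw [sub_eq_add_neg, exp_add, ← neg_mul]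
  field_simp

lemma ProbabilityTheory.IndepFun.measure_preimage_eq_lintegral {Ω α β : Type*}
    [MeasurableSpace Ω] [MeasurableSpace α] [MeasurableSpace β] {P : Measure Ω} [IsFiniteMeasure P]
    {W : Ω → α} {Y : Ω → β} (h : IndepFun W Y P) (hW : Measurable W) (hY : Measurable Y)
    {S : Set (α × β)} (hS : MeasurableSet S) :
    P ((fun ω => (W ω, Y ω)) ⁻¹' S) = ∫⁻ w, P.map Y (Prod.mk w ⁻¹' S) ∂P.map W := by
  rw [← Measure.map_apply (hW.prodMk hY) hS,
    (indepFun_iff_map_prod_eq_prod_map_map hW.aemeasurable hY.aemeasurable).1 h,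
    Measure.prod_apply hS]

lemma ProbabilityTheory.IndepFun.measureReal_preimage_eq_integral {Ω α β : Type*}
    [MeasurableSpace Ω] [MeasurableSpace α] [MeasurableSpace β] {P : Measure Ω}
    [IsFiniteMeasure P] {W : Ω → α} {Y : Ω → β} (h : IndepFun W Y P) (hW : Measurable W)
    (hY : Measurable Y) {S : Set (α × β)} (hS : MeasurableSet S) {f : α → ℝ}
    (hf : Measurable f) (hf_nonneg : 0 ≤ f)
    (hsection : ∀ᵐ w ∂P.map W, P.map Y (Prod.mk w ⁻¹' S) = ENNReal.ofReal (f w)) :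
    (P ((fun ω => (W ω, Y ω)) ⁻¹' S)).toReal = ∫ ω, f (W ω) ∂P := by
  rw [h.measure_preimage_eq_lintegral hW hY hS, lintegral_congr_ae hsection,
    lintegral_map hf.ennreal_ofReal hW,
    integral_eq_lintegral_of_nonneg_ae (ae_of_all _ fun ω => hf_nonneg (W ω))
      (hf.comp hW).aestronglyMeasurable]

lemma expLaw_prod_expLaw_decoding_region {lam₁ lam₂ A B ρ η u₁ u₂ z : ℝ} (hlam₁ : 0 < lam₁)
    (hlam₂ : 0 < lam₂) (hA : 0 < A) (hB : 0 < B) (hρ : 0 < ρ) (hη : 0 ≤ η) (hu₁ : 0 ≤ u₁)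
    (hu₂ : 0 ≤ u₂) (hz : 0 ≤ z) :
    (expLaw lam₁).prod (expLaw lam₂)
        {p | p.2 > (B * ρ * p.1 * u₂ + η * ρ * z * u₂ + u₂) / (A * ρ) ∧
          p.1 > (η * ρ * z * u₁ + u₁) / (B * ρ)} =
      ENNReal.ofReal (A * lam₂ / (A * lam₂ + B * u₂ * lam₁) *
        exp (-u₂ / (A * lam₂ * ρ) - (1 / lam₁ + B * u₂ / (A * lam₂)) * u₁ / (B * ρ)) *
        exp (-(η * u₂ / (A * lam₂) + (1 / lam₁ + B * u₂ / (A * lam₂)) * η * u₁ / B) * z)) := by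
  have hwedge : {p : ℝ × ℝ | p.2 > (B * ρ * p.1 * u₂ + η * ρ * z * u₂ + u₂) / (A * ρ) ∧
      p.1 > (η * ρ * z * u₁ + u₁) / (B * ρ)} =
      {p | (η * ρ * z * u₁ + u₁) / (B * ρ) < p.1 ∧
        B * u₂ / A * p.1 + (η * ρ * z * u₂ + u₂) / (A * ρ) < p.2} := by
    ext p
    simp only [mem_ofPred_eq, gt_iff_lt]
    rw [and_comm, show (B * ρ * p.1 * u₂ + η * ρ * z * u₂ + u₂) / (A * ρ) =
      B * u₂ / A * p.1 + (η * ρ * z * u₂ + u₂) / (A * ρ) by field_simp; ring]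
  rw [hwedge, expLaw_prod_expLaw_wedge hlam₁ hlam₂ (by positivity) (by positivity)
    (by positivity), mul_assoc (A * lam₂ / (A * lam₂ + B * u₂ * lam₁)), ← exp_add]
  congr 2
  · field_simp
  · congr 1
    field_simp
    ring

theorem stmt_10 {Ω : Type*} [MeasurableSpace Ω] (P : Measure Ω) [IsProbabilityMeasure P]
    (lam₁ lam₂ A B ρ η u₁ u₂ : ℝ)
    (hlam₁ : 0 < lam₁) (hlam₂ : 0 < lam₂) (hA : 0 < A) (hB : 0 < B) (hρ : 0 < ρ)
    (hη : 0 < η) (hu₁ : 0 < u₁) (hu₂ : 0 < u₂)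
    (X₁ X₂ Z : Ω → ℝ)
    (hX₁ : HasExpLaw P X₁ lam₁) (hX₂ : HasExpLaw P X₂ lam₂)
    (hZmeas : Measurable Z) (hZnonneg : ∀ ω, 0 ≤ Z ω)
    (hindep : iIndepFun ![X₁, X₂, Z] P)
    (Q₁p : ℝ)
    (hQ₁p : Q₁p = η * u₂ / (A * lam₂) + (1 / lam₁ + B * u₂ / (A * lam₂)) * η * u₁ / B) :
    (P {ω | X₂ ω > (B * ρ * X₁ ω * u₂ + η * ρ * Z ω * u₂ + u₂) / (A * ρ) ∧
        X₁ ω > (η * ρ * Z ω * u₁ + u₁) / (B * ρ)}).toReal =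
      (A * lam₂ / (A * lam₂ + B * u₂ * lam₁)) *
        Real.exp (-u₂ / (A * lam₂ * ρ) - (1 / lam₁ + B * u₂ / (A * lam₂)) * u₁ / (B * ρ)) *
        ∫ ω, Real.exp (-Q₁p * Z ω) ∂P := by
  subst hQ₁p
  have hmeas : ∀ i, Measurable (![X₁, X₂, Z] i) := by
    intro i; fin_cases i
    exacts [hX₁.1, hX₂.1, hZmeas]
  have hZ_indep : IndepFun Z (fun ω => (X₁ ω, X₂ ω)) P := by
    simpa using (hindep.indepFun_prodMk hmeas 0 1 2 (by decide) (by decide)).symm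
  have hlaw : P.map (fun ω => (X₁ ω, X₂ ω)) = (expLaw lam₁).prod (expLaw lam₂) := by
    rw [(indepFun_iff_map_prod_eq_prod_map_map hX₁.1.aemeasurable hX₂.1.aemeasurable).1
      (by simpa using hindep.indepFun (show (0 : Fin 3) ≠ 1 by decide)),
      hX₁.map_eq_expLaw, hX₂.map_eq_expLaw]
  set S : Set (ℝ × ℝ × ℝ) := {q | q.2.2 > (B * ρ * q.2.1 * u₂ + η * ρ * q.1 * u₂ + u₂) / (A * ρ) ∧
    q.2.1 > (η * ρ * q.1 * u₁ + u₁) / (B * ρ)}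
  have hS : MeasurableSet S := by
    simp only [S, gt_iff_lt, ofPred_and]
    exact (measurableSet_lt (by fun_prop) (by fun_prop)).inter
      (measurableSet_lt (by fun_prop) (by fun_prop))
  have hsection := (ae_map_iff hZmeas.aemeasurable measurableSet_Ici).2 (ae_of_all P hZnonneg)
    |>.mono fun z hz => expLaw_prod_expLaw_decoding_region hlam₁ hlam₂ hA hB hρ hη.le hu₁.le
      hu₂.le hz
  rw [← hlaw] at hsection
  change (P ((fun ω => (Z ω, X₁ ω, X₂ ω)) ⁻¹' S)).toReal = _
  rw [hZ_indep.measureReal_preimage_eq_integral hZmeas (hX₁.1.prodMk hX₂.1) hS (by fun_prop)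
    (fun z => by positivity) hsection, integral_const_mul]
end

section
/- Let M ≥ 1 and let (X_j)_{j=1}^M, (X′_j)_{j=1}^M and ε be mutually independent random variables, where X_j is exponentially distributed with mean λ_j > 0, X′_j is exponentially distributed with mean λ′_j > 0, and ε takes the values 0 and 1 each with probability 1/2. Let ρ, u > 0 and 0 < a₁ < 1, a₂ = 1 − a₁. Define the intercept probability P = (1/2)·ℙ( max_{1≤j≤M} ρ·X_j/(a₂·ρ·X′_j + 1) > u ) + (1/2)·ℙ( max_{1≤j≤M} a₁·ρ·X_j/(a₂·ρ·X_j + 1) > u ). Then: if a₁/a₂ > u, P = 1 − (1/2)·∏_{j=1}^M ( 1 − (λ_j/(λ_j + a₂·λ′_j·u))·exp(−u/(λ_j·ρ)) ) − (1/2)·∏_{j=1}^M ( 1 − exp(−u/(λ_j·(a₁·ρ − a₂·ρ·u))) ); otherwise, P = 1/2 − (1/2)·∏_{j=1}^M ( 1 − (λ_j/(λ_j + a₂·λ′_j·u))·exp(−u/(λ_j·ρ)) ). -/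
open MeasureTheory ProbabilityTheory Real

section Aux

lemma hasDeriv_aux' {b : ℝ} (hb : 0 < b) (x : ℝ) :
    HasDerivAt (fun x => -Real.exp (-b * x) / b) (Real.exp (-b * x)) x := by
  have h1 : HasDerivAt (fun x : ℝ => -b * x) (-b) x := by
    simpa using (hasDerivAt_id x).const_mul (-b)
  have h2 := (h1.exp.neg.div_const b)
  convert h2 using 1
  · rfl
  · rfl
  · rfl
  · field_simp

lemma integral_exp_neg_mul_Ioi' {b t : ℝ} (hb : 0 < b) :
    ∫ x in Set.Ioi t, Real.exp (-b * x) = Real.exp (-b * t) / b := by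
  have h := integral_Ioi_of_hasDerivAt_of_tendsto (f := fun x => -Real.exp (-b * x) / b)
    (f' := fun x => Real.exp (-b * x)) (a := t) (m := 0)
    ((hasDeriv_aux' hb t).continuousAt.continuousWithinAt)
    (fun x _ => hasDeriv_aux' hb x)
    (exp_neg_integrableOn_Ioi t hb) ?_
  · rw [h]; ring
  · have : Filter.Tendsto (fun x => Real.exp (-b * x)) Filter.atTop (nhds 0) :=
      Real.tendsto_exp_atBot.comp (Filter.tendsto_id.const_mul_atTop_of_neg (by linarith))
    simpa using this.neg.div_const b

lemma ennreal_ofReal_prod {α : Type*} (s : Finset α) (f : α → ℝ) (hf : ∀ a ∈ s, 0 ≤ f a) :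
    ENNReal.ofReal (∏ a ∈ s, f a) = ∏ a ∈ s, ENNReal.ofReal (f a) := by
  classical
  induction s using Finset.induction_on with
  | empty => simp
  | @insert a s ha ih =>
    rw [Finset.prod_insert ha, Finset.prod_insert ha,
      ENNReal.ofReal_mul (hf a (Finset.mem_insert_self a s)),
      ih (fun b hb => hf b (Finset.mem_insert_of_mem hb))]

variable {Ω : Type*} [MeasurableSpace Ω] {P : Measure Ω} {X : Ω → ℝ} {lam : ℝ}

lemma expLaw_map_Ioi (h : HasExpLaw P X lam) (hlam : 0 < lam) {t : ℝ} (ht : 0 ≤ t) :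
    P.map X (Set.Ioi t) = ENNReal.ofReal (Real.exp (-t / lam)) := by
  rw [h.2, withDensity_apply _ measurableSet_Ioi]
  have hcongr : ∀ x ∈ Set.Ioi t,
      ENNReal.ofReal (if 0 ≤ x then (1 / lam) * Real.exp (-x / lam) else 0)
        = ENNReal.ofReal ((1 / lam) * Real.exp (-(1/lam) * x)) := by
    intro x hx
    rw [if_pos (le_trans ht (le_of_lt hx))]
    ring_nf
  rw [setLIntegral_congr_fun measurableSet_Ioi hcongr]
  have hint : IntegrableOn (fun x => (1 / lam) * Real.exp (-(1/lam) * x)) (Set.Ioi t) :=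
    (exp_neg_integrableOn_Ioi t (by positivity)).const_mul _
  rw [← ofReal_integral_eq_lintegral_ofReal hint
    (ae_of_all _ fun x => by positivity)]
  congr 1
  rw [MeasureTheory.integral_const_mul, integral_exp_neg_mul_Ioi' (by positivity : 0 < 1/lam)]
  field_simp

lemma expLaw_survival (h : HasExpLaw P X lam) (hlam : 0 < lam) {t : ℝ} (ht : 0 ≤ t) :
    P {ω | t < X ω} = ENNReal.ofReal (Real.exp (-t / lam)) := by
  have : {ω | t < X ω} = X ⁻¹' Set.Ioi t := rfl
  rw [this, ← Measure.map_apply h.1 measurableSet_Ioi, expLaw_map_Ioi h hlam ht]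

lemma expLaw_ae_nonneg (h : HasExpLaw P X lam) : ∀ᵐ ω ∂P, 0 ≤ X ω := by
  have : P {ω | X ω < 0} = 0 := by
    have h0 : {ω | X ω < 0} = X ⁻¹' Set.Iio 0 := rfl
    rw [h0, ← Measure.map_apply h.1 measurableSet_Iio, h.2,
      withDensity_apply _ measurableSet_Iio]
    rw [setLIntegral_congr_fun (g := fun _ => ENNReal.ofReal 0) measurableSet_Iio
      (fun x (hx : x ∈ Set.Iio 0) => by rw [if_neg (not_le.2 hx)])]
    simp
  filter_upwards [measure_eq_zero_iff_ae_notMem.mp this] with ω hω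
  simpa using not_lt.mp hω

lemma expLaw_pair [IsProbabilityMeasure P] {X' : Ω → ℝ} {lam' c d : ℝ} (hX : HasExpLaw P X lam)
    (hX' : HasExpLaw P X' lam') (hlam : 0 < lam) (hlam' : 0 < lam')
    (hc : 0 ≤ c) (hd : 0 ≤ d) (hindep : IndepFun X X' P) :
    P {ω | c * X' ω + d < X ω}
      = ENNReal.ofReal ((lam / (lam + c * lam')) * Real.exp (-d / lam)) := by
  have hmap : P.map (fun ω => (X' ω, X ω)) = (P.map X').prod (P.map X) :=
    (indepFun_iff_map_prod_eq_prod_map_map hX'.1.aemeasurable hX.1.aemeasurable).mp hindep.symm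
  have hSmeas : MeasurableSet {p : ℝ × ℝ | c * p.1 + d < p.2} :=
    measurableSet_lt ((measurable_fst.const_mul c).add_const d) measurable_snd
  have h1 : {ω | c * X' ω + d < X ω} = (fun ω => (X' ω, X ω)) ⁻¹' {p | c * p.1 + d < p.2} := rfl
  have hXprob : IsProbabilityMeasure (P.map X) := Measure.isProbabilityMeasure_map hX.1.aemeasurable
  rw [h1, ← Measure.map_apply (hX'.1.prodMk hX.1) hSmeas, hmap, Measure.prod_apply hSmeas]
  have h2 : ∀ y : ℝ, (Prod.mk y ⁻¹' {p : ℝ × ℝ | c * p.1 + d < p.2}) = Set.Ioi (c * y + d) :=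
    fun y => rfl
  simp_rw [h2]
  rw [hX'.2]
  have hmeasg : Measurable (fun y : ℝ => P.map X (Set.Ioi (c * y + d))) := by
    have hanti : Antitone (fun s : ℝ => P.map X (Set.Ioi s)) :=
      fun s t hst => measure_mono (Set.Ioi_subset_Ioi hst)
    exact hanti.measurable.comp ((measurable_id.const_mul c).add_const d)
  have hdens : Measurable fun x : ℝ =>
      ENNReal.ofReal (if 0 ≤ x then (1/lam') * Real.exp (-x/lam') else 0) :=
    (Measurable.ite measurableSet_Ici (by fun_prop) measurable_const).ennreal_ofReal
  rw [lintegral_withDensity_eq_lintegral_mul _ hdens hmeasg]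
  set B : ℝ := 1 / lam' + c / lam with hB
  have hBpos : 0 < B := by positivity
  have hpt : (fun y => ENNReal.ofReal (if 0 ≤ y then (1/lam') * Real.exp (-y/lam') else 0)
        * P.map X (Set.Ioi (c * y + d)))
      = fun y => ENNReal.ofReal (Set.indicator (Set.Ici 0)
        (fun y => ((1/lam') * Real.exp (-d/lam)) * Real.exp (-B * y)) y) := by
    funext y
    simp only [Set.indicator_apply, Set.mem_Ici]
    by_cases hy : 0 ≤ y
    · rw [if_pos hy, if_pos hy,
        expLaw_map_Ioi hX hlam (by positivity), ← ENNReal.ofReal_mul (by positivity)]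
      congr 1
      rw [hB, mul_assoc, mul_assoc, ← Real.exp_add, ← Real.exp_add]
      congr 2
      field_simp
      ring
    · rw [if_neg hy, if_neg hy]
      simp
  simp only [Pi.mul_apply]
  rw [hpt]
  have hint : Integrable (Set.indicator (Set.Ici 0)
      (fun y => ((1/lam') * Real.exp (-d/lam)) * Real.exp (-B * y))) := by
    rw [integrable_indicator_iff measurableSet_Ici,
      integrableOn_Ici_iff_integrableOn_Ioi]
    exact (exp_neg_integrableOn_Ioi 0 hBpos).const_mul _
  rw [← ofReal_integral_eq_lintegral_ofReal hint
    (ae_of_all _ fun y => Set.indicator_nonneg (fun y _ => by positivity) y)]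
  rw [integral_indicator measurableSet_Ici, integral_Ici_eq_integral_Ioi,
    MeasureTheory.integral_const_mul, integral_exp_neg_mul_Ioi' hBpos]
  congr 1
  rw [hB]
  have h1 : lam + c * lam' > 0 := by positivity
  field_simp
  simp

end Aux

section Key
variable {Ω : Type*} [MeasurableSpace Ω] {P : Measure Ω} [IsProbabilityMeasure P]
  {M : ℕ} {X X' : Fin M → Ω → ℝ} {ε : Ω → ℝ}

lemma key_prod (hXm : ∀ j, Measurable (X j)) (hX'm : ∀ j, Measurable (X' j))
    (hεm : Measurable ε)
    (hindep : iIndepFun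
      (Sum.elim X (Sum.elim X' (fun (_ : Unit) => ε))) P)
    (S : Fin M → Set (ℝ × ℝ)) (hS : ∀ j, MeasurableSet (S j)) :
    ∀ s : Finset (Fin M),
      P (⋂ j ∈ s, {ω | (X j ω, X' j ω) ∈ S j})
        = ∏ j ∈ s, P {ω | (X j ω, X' j ω) ∈ S j} := by
  set f := Sum.elim X (Sum.elim X' (fun (_ : Unit) => ε)) with hf
  have hfm : ∀ i, Measurable (f i) := by
    rintro (j | j | _)
    exacts [hXm j, hX'm j, hεm]
  intro s
  induction s using Finset.induction_on with
  | empty => simp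
  | @insert a s ha ih =>
    rw [Finset.set_biInter_insert, Finset.prod_insert ha, ← ih]
    set A : Finset (Fin M ⊕ (Fin M ⊕ Unit)) := {Sum.inl a, Sum.inr (Sum.inl a)} with hA
    set T : Finset (Fin M ⊕ (Fin M ⊕ Unit)) :=
      s.image Sum.inl ∪ s.image (fun j => Sum.inr (Sum.inl j)) with hT
    have hdisj : Disjoint A T := by
      rw [Finset.disjoint_left]
      intro i hiA hiT
      simp only [hA, Finset.mem_insert, Finset.mem_singleton] at hiA
      simp only [hT, Finset.mem_union, Finset.mem_image] at hiT
      rcases hiA with rfl | rfl <;>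
        rcases hiT with ⟨j, hj, h⟩ | ⟨j, hj, h⟩ <;> simp_all
    have hIF := hindep.indepFun_finset A T hdisj hfm
    have hmemA1 : Sum.inl a ∈ A := by simp [hA]
    have hmemA2 : Sum.inr (Sum.inl a) ∈ A := by simp [hA]
    have hmemT1 : ∀ j ∈ s, Sum.inl j ∈ T := fun j hj => by
      simp only [hT, Finset.mem_union, Finset.mem_image]
      exact Or.inl ⟨j, hj, rfl⟩
    have hmemT2 : ∀ j ∈ s, Sum.inr (Sum.inl j) ∈ T := fun j hj => by
      simp only [hT, Finset.mem_union, Finset.mem_image]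
      exact Or.inr ⟨j, hj, rfl⟩
    set sA : Set ((i : A) → ℝ) :=
      {g | (g ⟨Sum.inl a, hmemA1⟩, g ⟨Sum.inr (Sum.inl a), hmemA2⟩) ∈ S a} with hsA
    set sT : Set ((i : T) → ℝ) :=
      ⋂ (j : {j // j ∈ s}), {g | (g ⟨Sum.inl j.1, hmemT1 j.1 j.2⟩,
        g ⟨Sum.inr (Sum.inl j.1), hmemT2 j.1 j.2⟩) ∈ S j.1} with hsT
    have hsAm : MeasurableSet sA :=
      ((measurable_pi_apply _).prodMk (measurable_pi_apply _)) (hS a)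
    have hsTm : MeasurableSet sT :=
      MeasurableSet.iInter fun j =>
        ((measurable_pi_apply _).prodMk (measurable_pi_apply _)) (hS j.1)
    have hprA : (fun ω (i : A) => f i.1 ω) ⁻¹' sA = {ω | (X a ω, X' a ω) ∈ S a} := rfl
    have hprT : (fun ω (i : T) => f i.1 ω) ⁻¹' sT = ⋂ j ∈ s, {ω | (X j ω, X' j ω) ∈ S j} := by
      ext ω
      simp only [Set.mem_preimage, hsT, Set.mem_iInter, Set.mem_setOf_eq, Subtype.forall]
      rfl
    have h := hIF.measure_inter_preimage_eq_mul sA sT hsAm hsTm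
    rw [hprA, hprT] at h
    exact h
end Key

theorem stmt_12 {Ω : Type*} [MeasurableSpace Ω] (P : Measure Ω) [IsProbabilityMeasure P]
    (M : ℕ) (hM : 1 ≤ M) (lam lam' : Fin M → ℝ)
    (hlam : ∀ j, 0 < lam j) (hlam' : ∀ j, 0 < lam' j)
    (ρ u a₁ a₂ : ℝ) (hρ : 0 < ρ) (hu : 0 < u) (ha₁ : 0 < a₁) (ha₁' : a₁ < 1)
    (ha₂ : a₂ = 1 - a₁)
    (X X' : Fin M → Ω → ℝ) (ε : Ω → ℝ)
    (hX : ∀ j, HasExpLaw P (X j) (lam j)) (hX' : ∀ j, HasExpLaw P (X' j) (lam' j))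
    (hεmeas : Measurable ε)
    (hε0 : P {ω | ε ω = 0} = 1/2) (hε1 : P {ω | ε ω = 1} = 1/2)
    (hindep : iIndepFun
      (Sum.elim X (Sum.elim X' (fun (_ : Unit) => ε))) P)
    (Pint : ℝ)
    (hPint : Pint =
      (1/2) * (P {ω | ∃ j : Fin M, ρ * X j ω / (a₂ * ρ * X' j ω + 1) > u}).toReal +
      (1/2) * (P {ω | ∃ j : Fin M, a₁ * ρ * X j ω / (a₂ * ρ * X j ω + 1) > u}).toReal) :
    (a₁ / a₂ > u →
      Pint = 1 -
        (1/2) * ∏ j : Fin M, (1 - (lam j / (lam j + a₂ * lam' j * u)) *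
          Real.exp (-u / (lam j * ρ))) -
        (1/2) * ∏ j : Fin M, (1 - Real.exp (-u / (lam j * (a₁ * ρ - a₂ * ρ * u))))) ∧
    (a₁ / a₂ ≤ u →
      Pint = 1/2 -
        (1/2) * ∏ j : Fin M, (1 - (lam j / (lam j + a₂ * lam' j * u)) *
          Real.exp (-u / (lam j * ρ)))) := by
  have hXm : ∀ j, Measurable (X j) := fun j => (hX j).1
  have hX'm : ∀ j, Measurable (X' j) := fun j => (hX' j).1
  have ha₂pos : 0 < a₂ := by rw [ha₂]; linarith
  have haeX : ∀ᵐ ω ∂P, ∀ j, 0 ≤ X j ω := (ae_all_iff).2 fun j => expLaw_ae_nonneg (hX j)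
  have haeX' : ∀ᵐ ω ∂P, ∀ j, 0 ≤ X' j ω := (ae_all_iff).2 fun j => expLaw_ae_nonneg (hX' j)
  -- the first probability
  set q1 : Fin M → ℝ :=
    fun j => (lam j / (lam j + a₂ * lam' j * u)) * Real.exp (-u / (lam j * ρ)) with hq1
  have hq1nonneg : ∀ j, 0 ≤ q1 j := fun j => by
    have h1 := hlam j; have h2 := hlam' j; rw [hq1]; positivity
  have hq1le : ∀ j, q1 j ≤ 1 := by
    intro j
    have h1 := hlam j; have h2 := hlam' j
    have hden : 0 < lam j + a₂ * lam' j * u := by positivity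
    rw [hq1]
    have hfrac : lam j / (lam j + a₂ * lam' j * u) ≤ 1 :=
      (div_le_one hden).2 (le_add_of_nonneg_right (by positivity))
    have hexp : Real.exp (-u / (lam j * ρ)) ≤ 1 := by
      rw [Real.exp_le_one_iff]
      exact div_nonpos_of_nonpos_of_nonneg (by linarith) (by positivity)
    calc lam j / (lam j + a₂ * lam' j * u) * Real.exp (-u / (lam j * ρ))
        ≤ 1 * 1 := by
          apply mul_le_mul hfrac hexp (Real.exp_nonneg _) (by norm_num)
      _ = 1 := by norm_num
  set C1 : Fin M → Set (ℝ × ℝ) := fun j => {p | p.1 ≤ a₂ * u * p.2 + u / ρ} with hC1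
  have hC1m : ∀ j, MeasurableSet (C1 j) :=
    fun j => measurableSet_le measurable_fst ((measurable_snd.const_mul _).add_const _)
  have hB1m : ∀ j, MeasurableSet {ω | (X j ω, X' j ω) ∈ C1 j} :=
    fun j => ((hXm j).prodMk (hX'm j)) (hC1m j)
  have hpair : ∀ j, P {ω | a₂ * u * X' j ω + u / ρ < X j ω} = ENNReal.ofReal (q1 j) := by
    intro j
    have hind : IndepFun (X j) (X' j) P :=
      hindep.indepFun (i := Sum.inl j) (j := Sum.inr (Sum.inl j)) (by simp)
    rw [expLaw_pair (hX j) (hX' j) (hlam j) (hlam' j) (by positivity) (by positivity) hind]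
    rw [hq1]
    congr 2
    · ring
    · congr 1
      field_simp
  have hB1 : ∀ j, P {ω | (X j ω, X' j ω) ∈ C1 j} = ENNReal.ofReal (1 - q1 j) := by
    intro j
    have hcompl : {ω | (X j ω, X' j ω) ∈ C1 j}ᶜ = {ω | a₂ * u * X' j ω + u / ρ < X j ω} := by
      ext ω; simp [hC1, not_le]
    have h2 := prob_compl_eq_one_sub (μ := P) (hB1m j).compl
    rw [compl_compl, hcompl, hpair j] at h2
    rw [h2, ENNReal.ofReal_sub _ (hq1nonneg j), ENNReal.ofReal_one]
  have hprodmem1 : 0 ≤ ∏ j : Fin M, (1 - q1 j) :=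
    Finset.prod_nonneg fun j _ => by linarith [hq1le j]
  have hprodmem1' : ∏ j : Fin M, (1 - q1 j) ≤ 1 :=
    Finset.prod_le_one (fun j _ => by linarith [hq1le j]) (fun j _ => by linarith [hq1nonneg j])
  have hbi1 : (⋂ j ∈ (Finset.univ : Finset (Fin M)), {ω | (X j ω, X' j ω) ∈ C1 j})
      = ⋂ j, {ω | (X j ω, X' j ω) ∈ C1 j} := by
    ext ω; simp
  have hI1 : P (⋂ j, {ω | (X j ω, X' j ω) ∈ C1 j})
      = ENNReal.ofReal (∏ j : Fin M, (1 - q1 j)) := by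
    rw [← hbi1, key_prod hXm hX'm hεmeas hindep C1 hC1m Finset.univ,
      ennreal_ofReal_prod _ _ (fun j _ => by linarith [hq1le j])]
    exact Finset.prod_congr rfl fun j _ => hB1 j
  have hI1meas : MeasurableSet (⋂ j, {ω | (X j ω, X' j ω) ∈ C1 j}) :=
    MeasurableSet.iInter fun j => hB1m j
  have hE1 : P {ω | ∃ j : Fin M, ρ * X j ω / (a₂ * ρ * X' j ω + 1) > u}
      = 1 - ENNReal.ofReal (∏ j : Fin M, (1 - q1 j)) := by
    have hae : ({ω | ∃ j : Fin M, ρ * X j ω / (a₂ * ρ * X' j ω + 1) > u} : Set Ω)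
        =ᵐ[P] ((⋂ j, {ω | (X j ω, X' j ω) ∈ C1 j})ᶜ : Set Ω) := by
      rw [Filter.eventuallyEq_set]
      filter_upwards [haeX'] with ω h0
      rw [Set.mem_compl_iff]
      simp only [Set.mem_setOf_eq, Set.mem_iInter,
        not_forall, gt_iff_lt, hC1, not_le]
      apply exists_congr
      intro j
      have hden : 0 < a₂ * ρ * X' j ω + 1 := by
        have := h0 j; positivity
      rw [lt_div_iff₀ hden,
        show a₂ * u * X' j ω + u / ρ = u * (a₂ * ρ * X' j ω + 1) / ρ by field_simp,
        div_lt_iff₀ hρ, mul_comm (X j ω) ρ]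
    rw [measure_congr hae, prob_compl_eq_one_sub hI1meas, hI1]
  have hE1toReal : (P {ω | ∃ j : Fin M, ρ * X j ω / (a₂ * ρ * X' j ω + 1) > u}).toReal
      = 1 - ∏ j : Fin M, (1 - q1 j) := by
    rw [hE1, ← ENNReal.ofReal_one, ← ENNReal.ofReal_sub _ hprodmem1,
      ENNReal.toReal_ofReal (by linarith)]
  constructor
  · -- case a₁ / a₂ > u
    intro hgt
    have hk : 0 < a₁ * ρ - a₂ * ρ * u := by
      have h1 : u * a₂ < a₁ := (lt_div_iff₀ ha₂pos).1 hgt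
      nlinarith
    set q2 : Fin M → ℝ := fun j => Real.exp (-u / (lam j * (a₁ * ρ - a₂ * ρ * u))) with hq2
    have hq2nonneg : ∀ j, 0 ≤ q2 j := fun j => Real.exp_nonneg _
    have hq2le : ∀ j, q2 j ≤ 1 := fun j => by
      rw [hq2, Real.exp_le_one_iff]
      have := hlam j
      exact div_nonpos_of_nonpos_of_nonneg (by linarith) (by positivity)
    set C2 : Fin M → Set (ℝ × ℝ) := fun j => {p | p.1 ≤ u / (a₁ * ρ - a₂ * ρ * u)} with hC2
    have hC2m : ∀ j, MeasurableSet (C2 j) :=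
      fun j => measurableSet_le measurable_fst measurable_const
    have hB2m : ∀ j, MeasurableSet {ω | (X j ω, X' j ω) ∈ C2 j} :=
      fun j => ((hXm j).prodMk (hX'm j)) (hC2m j)
    have hsurv : ∀ j, P {ω | u / (a₁ * ρ - a₂ * ρ * u) < X j ω} = ENNReal.ofReal (q2 j) := by
      intro j
      rw [expLaw_survival (hX j) (hlam j) (by positivity), hq2]
      have hk' := hk.ne'
      have hl := (hlam j).ne'
      congr 2
      field_simp
    have hB2 : ∀ j, P {ω | (X j ω, X' j ω) ∈ C2 j} = ENNReal.ofReal (1 - q2 j) := by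
      intro j
      have hcompl : {ω | (X j ω, X' j ω) ∈ C2 j}ᶜ
          = {ω | u / (a₁ * ρ - a₂ * ρ * u) < X j ω} := by
        ext ω; simp [hC2, not_le]
      have h2 := prob_compl_eq_one_sub (μ := P) (hB2m j).compl
      rw [compl_compl, hcompl, hsurv j] at h2
      rw [h2, ENNReal.ofReal_sub _ (hq2nonneg j), ENNReal.ofReal_one]
    have hprodmem2 : 0 ≤ ∏ j : Fin M, (1 - q2 j) :=
      Finset.prod_nonneg fun j _ => by linarith [hq2le j]
    have hprodmem2' : ∏ j : Fin M, (1 - q2 j) ≤ 1 :=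
      Finset.prod_le_one (fun j _ => by linarith [hq2le j]) (fun j _ => by linarith [hq2nonneg j])
    have hbi2 : (⋂ j ∈ (Finset.univ : Finset (Fin M)), {ω | (X j ω, X' j ω) ∈ C2 j})
        = ⋂ j, {ω | (X j ω, X' j ω) ∈ C2 j} := by
      ext ω; simp
    have hI2 : P (⋂ j, {ω | (X j ω, X' j ω) ∈ C2 j})
        = ENNReal.ofReal (∏ j : Fin M, (1 - q2 j)) := by
      rw [← hbi2, key_prod hXm hX'm hεmeas hindep C2 hC2m Finset.univ,
        ennreal_ofReal_prod _ _ (fun j _ => by linarith [hq2le j])]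
      exact Finset.prod_congr rfl fun j _ => hB2 j
    have hI2meas : MeasurableSet (⋂ j, {ω | (X j ω, X' j ω) ∈ C2 j}) :=
      MeasurableSet.iInter fun j => hB2m j
    have hE2 : P {ω | ∃ j : Fin M, a₁ * ρ * X j ω / (a₂ * ρ * X j ω + 1) > u}
        = 1 - ENNReal.ofReal (∏ j : Fin M, (1 - q2 j)) := by
      have hae : ({ω | ∃ j : Fin M, a₁ * ρ * X j ω / (a₂ * ρ * X j ω + 1) > u} : Set Ω)
          =ᵐ[P] ((⋂ j, {ω | (X j ω, X' j ω) ∈ C2 j})ᶜ : Set Ω) := by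
        rw [Filter.eventuallyEq_set]
        filter_upwards [haeX] with ω h0
        rw [Set.mem_compl_iff]
        simp only [Set.mem_setOf_eq, Set.mem_iInter,
          not_forall, gt_iff_lt, hC2, not_le]
        apply exists_congr
        intro j
        have hden : 0 < a₂ * ρ * X j ω + 1 := by
          have := h0 j; positivity
        rw [lt_div_iff₀ hden, div_lt_iff₀ hk]
        constructor <;> intro h <;> nlinarith
      rw [measure_congr hae, prob_compl_eq_one_sub hI2meas, hI2]
    have hE2toReal : (P {ω | ∃ j : Fin M, a₁ * ρ * X j ω / (a₂ * ρ * X j ω + 1) > u}).toReal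
        = 1 - ∏ j : Fin M, (1 - q2 j) := by
      rw [hE2, ← ENNReal.ofReal_one, ← ENNReal.ofReal_sub _ hprodmem2,
        ENNReal.toReal_ofReal (by linarith)]
    rw [hPint, hE1toReal, hE2toReal, hq1, hq2]
    ring
  · -- case a₁ / a₂ ≤ u
    intro hle
    have ha : a₁ ≤ a₂ * u := by
      have := (div_le_iff₀ ha₂pos).1 hle
      linarith
    have hE2zero : P {ω | ∃ j : Fin M, a₁ * ρ * X j ω / (a₂ * ρ * X j ω + 1) > u} = 0 := by
      rw [measure_eq_zero_iff_ae_notMem]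
      filter_upwards [haeX] with ω h0
      simp only [Set.mem_setOf_eq, not_exists, gt_iff_lt, not_lt]
      intro j
      have hx := h0 j
      have hden : 0 < a₂ * ρ * X j ω + 1 := by positivity
      rw [div_le_iff₀ hden]
      nlinarith [mul_le_mul_of_nonneg_right ha (mul_nonneg hρ.le hx)]
    rw [hPint, hE1toReal, hE2zero, hq1]
    simp
    ring
end
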